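/- Let 0 < D ≤ 1 and let f ∈ C(1 + Dz). If g ∈ 𝒜 is majorized by f on 𝔻, then |g'(z)| ≤ |f'(z)| for all |z| ≤ r₀, where r₀ is the smallest positive root of the equation (1 − r²)·(D r e^{−Dr}/(e^{−Dr} − 1)) + 2r = 0. -/

import Mathlib

open Complex Metric Set

noncomputable section

/-- The open unit disk in ℂ. -/
def unitDisk : Set ℂ := Metric.ball 0 1

/-- The class 𝒜 of analytic functions on 𝔻 normalized by f(0)=0, f'(0)=1. -/
def InClassA (f : ℂ → ℂ) : Prop :=
  DifferentiableOn ℂ f unitDisk ∧ f 0 = 0 ∧ deriv f 0 = 1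

/-- Subordination g ≺ f on the unit disk. -/
def Subord (g f : ℂ → ℂ) : Prop :=
  ∃ ω : ℂ → ℂ, DifferentiableOn ℂ ω unitDisk ∧ ω 0 = 0 ∧
    (∀ z ∈ unitDisk, ω z ∈ unitDisk) ∧ ∀ z ∈ unitDisk, g z = f (ω z)

/-- g is majorized by f on the unit disk. -/
def MajorizedBy (g f : ℂ → ℂ) : Prop :=
  ∃ Φ : ℂ → ℂ, DifferentiableOn ℂ Φ unitDisk ∧
    (∀ z ∈ unitDisk, ‖Φ z‖ ≤ 1) ∧ ∀ z ∈ unitDisk, g z = Φ z * f z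

/-- The Ma-Minda starlike class S*(ψ). -/
def InStar (ψ f : ℂ → ℂ) : Prop :=
  InClassA f ∧ Subord (fun z => z * deriv f z / f z) ψ

/-- The Ma-Minda convex class C(ψ). -/
def InConvexClass (ψ f : ℂ → ℂ) : Prop :=
  InClassA f ∧ Subord (fun z => 1 + z * deriv (deriv f) z / deriv f z) ψ

/-!
Write `1 + z f''/f' = 1 + D ω(z)` with a Schwarz function `ω`. Since `|ω(z)| ≤ |z|`, this gives
`|f''| ≤ D |f'|`, and Grönwall's inequality along the radius `[0, z]` yields the growth bound
`|f(z)| ≤ |f'(z)| (e^{D|z|} - 1) / D`.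
If `g = Φ f` with `|Φ| ≤ 1`, then `g' = Φ' f + Φ f'`, and the Schwarz–Pick inequality
`|Φ'| (1 - |z|²) ≤ 1 - |Φ|²` shows `|g'(z)| ≤ |f'(z)|` as soon as `2 |f(z)| ≤ (1 - |z|²) |f'(z)|`.
The equation defining `r₀` is equivalent to `2 (e^{D r₀} - 1) / D = 1 - r₀²`; the left-hand side
increases and the right-hand side decreases in `r₀`, so the growth bound gives this condition
for `|z| ≤ r₀`.
-/

open Filter Topology ComplexConjugate

section SchwarzPick

def diskMoebius (a w : ℂ) : ℂ := (w - a) / (1 - conj a * w)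

lemma one_sub_conj_mul_ne_zero {a w : ℂ} (ha : ‖a‖ < 1) (hw : ‖w‖ < 1) :
    1 - conj a * w ≠ 0 := by
  have hlt : ‖conj a * w‖ < 1 := by
    rw [norm_mul, RCLike.norm_conj]
    exact mul_lt_one_of_nonneg_of_lt_one_left (norm_nonneg a) ha hw.le
  intro h
  rw [sub_eq_zero] at h
  rw [← h, norm_one] at hlt
  exact hlt.false

lemma norm_one_sub_conj_mul_self {a : ℂ} (ha : ‖a‖ ≤ 1) :
    ‖1 - conj a * a‖ = 1 - ‖a‖ ^ 2 := by
  rw [← normSq_eq_conj_mul_self, ← ofReal_one, ← ofReal_sub, norm_real, Real.norm_eq_abs,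
    ← Complex.sq_norm, abs_of_nonneg (by nlinarith [norm_nonneg a])]

lemma norm_diskMoebius_lt_one {a w : ℂ} (ha : ‖a‖ < 1) (hw : ‖w‖ < 1) :
    ‖diskMoebius a w‖ < 1 := by
  have hden := one_sub_conj_mul_ne_zero ha hw
  rw [diskMoebius, norm_div, div_lt_one (norm_pos_iff.2 hden)]
  have key : normSq (1 - conj a * w) - normSq (w - a) = (1 - normSq a) * (1 - normSq w) := by
    simp only [normSq_apply, sub_re, sub_im, one_re, one_im, mul_re, mul_im, conj_re, conj_im]
    ring
  simp only [← Complex.sq_norm] at key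
  have : ‖w - a‖ ^ 2 < ‖1 - conj a * w‖ ^ 2 := by
    nlinarith [mul_pos (by nlinarith [norm_nonneg a] : 0 < 1 - ‖a‖ ^ 2)
      (by nlinarith [norm_nonneg w] : 0 < 1 - ‖w‖ ^ 2)]
  exact lt_of_pow_lt_pow_left₀ 2 (norm_nonneg _) this

lemma mapsTo_diskMoebius {a : ℂ} (ha : ‖a‖ < 1) :
    MapsTo (diskMoebius a) (ball 0 1) (ball 0 1) := fun w hw => by
  rw [mem_ball_zero_iff] at hw ⊢
  exact norm_diskMoebius_lt_one ha hw

lemma differentiableOn_diskMoebius {a : ℂ} (ha : ‖a‖ < 1) :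
    DifferentiableOn ℂ (diskMoebius a) (ball 0 1) :=
  DifferentiableOn.div (by fun_prop) (by fun_prop) fun w hw =>
    one_sub_conj_mul_ne_zero ha (mem_ball_zero_iff.1 hw)

lemma hasDerivAt_diskMoebius {a w : ℂ} (h : 1 - conj a * w ≠ 0) :
    HasDerivAt (diskMoebius a) ((1 - conj a * a) / (1 - conj a * w) ^ 2) w := by
  have := ((hasDerivAt_id' w).sub_const a).div
    (((hasDerivAt_id' w).const_mul (conj a)).const_sub 1) h
  exact this.congr_deriv (by ring)

lemma diskMoebius_self (a : ℂ) : diskMoebius a a = 0 := by simp [diskMoebius]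

lemma diskMoebius_neg_zero (a : ℂ) : diskMoebius (-a) 0 = a := by simp [diskMoebius]

variable {Φ : ℂ → ℂ} {z : ℂ}

/-- The Schwarz–Pick lemma. -/
theorem norm_deriv_mul_le_of_mapsTo_ball (hd : DifferentiableOn ℂ Φ (ball 0 1))
    (hm : MapsTo Φ (ball 0 1) (ball 0 1)) (hz : z ∈ ball 0 1) :
    ‖deriv Φ z‖ * (1 - ‖z‖ ^ 2) ≤ 1 - ‖Φ z‖ ^ 2 := by
  set a := Φ z
  have hz1 : ‖-z‖ < 1 := by simpa using hz
  have ha1 : ‖a‖ < 1 := mem_ball_zero_iff.1 (hm hz)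
  -- `F` fixes `0` and maps the disk to itself, so Schwarz's lemma bounds `F' 0`.
  set F := diskMoebius a ∘ Φ ∘ diskMoebius (-z)
  have hFm : MapsTo F (ball 0 1) (ball 0 1) :=
    (mapsTo_diskMoebius ha1).comp (hm.comp (mapsTo_diskMoebius hz1))
  have hFd : DifferentiableOn ℂ F (ball 0 1) :=
    (differentiableOn_diskMoebius ha1).comp
      (hd.comp (differentiableOn_diskMoebius hz1) (mapsTo_diskMoebius hz1))
      (hm.comp (mapsTo_diskMoebius hz1))
  have hF0 : F 0 = 0 := by simp [F, diskMoebius_neg_zero, a, diskMoebius_self]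
  have hFderiv : HasDerivAt F ((1 - conj a * a) / (1 - conj a * a) ^ 2 *
      (deriv Φ z * ((1 - conj (-z) * -z) / (1 - conj (-z) * 0) ^ 2))) 0 := by
    refine (hasDerivAt_diskMoebius (one_sub_conj_mul_ne_zero ha1 ha1)).comp_of_eq 0
      ((hd.differentiableAt (isOpen_ball.mem_nhds hz)).hasDerivAt.comp_of_eq 0
        (hasDerivAt_diskMoebius (by simp)) (diskMoebius_neg_zero z).symm) ?_
    simp [a, diskMoebius_neg_zero]
  have hSchwarz := norm_deriv_le_one_of_mapsTo_ball hFd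
    (by rw [hF0]; exact hFm.mono_right ball_subset_closedBall) one_pos
  have hpos : 0 < 1 - ‖a‖ ^ 2 := by nlinarith [norm_nonneg a]
  have hF' : deriv F 0 = deriv Φ z * (1 - conj z * z) / (1 - conj a * a) := by
    have := one_sub_conj_mul_ne_zero ha1 ha1
    rw [hFderiv.deriv]
    field_simp
    simp
  rw [hF', norm_div, norm_mul, norm_one_sub_conj_mul_self ha1.le,
    norm_one_sub_conj_mul_self (mem_ball_zero_iff.1 hz).le, div_le_one hpos] at hSchwarz
  linarith

theorem norm_deriv_mul_le_of_norm_le_one (hd : DifferentiableOn ℂ Φ (ball 0 1))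
    (hb : ∀ w ∈ ball (0 : ℂ) 1, ‖Φ w‖ ≤ 1) (hz : z ∈ ball 0 1) :
    ‖deriv Φ z‖ * (1 - ‖z‖ ^ 2) ≤ 1 - ‖Φ z‖ ^ 2 := by
  -- Apply the strict version to `s * Φ` for `0 < s < 1` and let `s → 1`.
  have hscaled : ∀ s ∈ Ioo (0 : ℝ) 1,
      s * (‖deriv Φ z‖ * (1 - ‖z‖ ^ 2)) ≤ 1 - s ^ 2 * ‖Φ z‖ ^ 2 := by
    rintro s ⟨hs0, hs1⟩
    have hm : MapsTo (fun w => (s : ℂ) * Φ w) (ball 0 1) (ball 0 1) := fun w hw => by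
      rw [mem_ball_zero_iff, norm_mul, norm_real, Real.norm_eq_abs, abs_of_pos hs0]
      nlinarith [hb w hw, norm_nonneg (Φ w)]
    have := norm_deriv_mul_le_of_mapsTo_ball (hd.const_mul _) hm hz
    rw [deriv_const_mul _ (hd.differentiableAt (isOpen_ball.mem_nhds hz)), norm_mul, norm_mul,
      norm_real, Real.norm_eq_abs, abs_of_pos hs0] at this
    linarith
  have hclosed : IsClosed
      {s : ℝ | s * (‖deriv Φ z‖ * (1 - ‖z‖ ^ 2)) ≤ 1 - s ^ 2 * ‖Φ z‖ ^ 2} :=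
    isClosed_le (by fun_prop) (by fun_prop)
  have hone := hclosed.closure_subset_iff.2 hscaled
    (by rw [closure_Ioo zero_ne_one]; exact right_mem_Icc.2 zero_le_one)
  simpa using hone

end SchwarzPick

theorem AnalyticOnNhd.eqOn_mul_of_div_eq {U : Set ℂ} {a b c : ℂ → ℂ}
    (ha : AnalyticOnNhd ℂ a U) (hb : AnalyticOnNhd ℂ b U) (hc : AnalyticOnNhd ℂ c U)
    (hU : IsOpen U) (hU' : IsPreconnected U) {z₀ : ℂ} (hz₀ : z₀ ∈ U) (hb₀ : b z₀ ≠ 0)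
    (h : ∀ z ∈ U, a z / b z = c z) : EqOn a (c * b) U := by
  have hev : (a - c * b) =ᶠ[𝓝 z₀] 0 := by
    filter_upwards [hU.mem_nhds hz₀, (hb z₀ hz₀).continuousAt.eventually_ne hb₀] with z hz hbz
    simp [← h z hz, hbz]
  intro z hz
  exact sub_eq_zero.1 ((ha.sub (hc.mul hb)).eqOn_zero_of_preconnected_of_eventuallyEq_zero
    hU' hz₀ hev hz)

theorem norm_deriv_deriv_le_of_mul_eq {f ω : ℂ → ℂ} {c : ℂ}
    (hf : DifferentiableOn ℂ f (ball 0 1)) (hω : DifferentiableOn ℂ ω (ball 0 1))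
    (hω₀ : ω 0 = 0) (hωm : MapsTo ω (ball 0 1) (ball 0 1))
    (h : ∀ z ∈ ball (0 : ℂ) 1, z * deriv (deriv f) z = c * ω z * deriv f z) :
    ∀ z ∈ ball (0 : ℂ) 1, ‖deriv (deriv f) z‖ ≤ ‖c‖ * ‖deriv f z‖ := by
  have hf' := (hf.analyticOnNhd isOpen_ball).deriv
  have hpunctured : ∀ z ∈ ball (0 : ℂ) 1, z ≠ 0 → ‖deriv (deriv f) z‖ ≤ ‖c‖ * ‖deriv f z‖ := by
    intro z hz hz0
    have hω : ‖ω z‖ ≤ ‖z‖ := norm_le_norm_of_mapsTo_ball hω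
      (hωm.mono_right ball_subset_closedBall) hω₀ (mem_ball_zero_iff.1 hz)
    have hnorm := congrArg norm (h z hz)
    rw [norm_mul, norm_mul, norm_mul] at hnorm
    refine le_of_mul_le_mul_left ?_ (norm_pos_iff.2 hz0)
    rw [hnorm]
    nlinarith [mul_le_mul_of_nonneg_left hω (mul_nonneg (norm_nonneg c) (norm_nonneg (deriv f z)))]
  intro z hz
  rcases eq_or_ne z 0 with rfl | hz0
  · have hcont : ContinuousAt (fun w => ‖c‖ * ‖deriv f w‖ - ‖deriv (deriv f) w‖) 0 :=
      continuousAt_const.mul (hf' 0 hz).continuousAt.norm |>.sub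
        (hf'.deriv 0 hz).continuousAt.norm
    have hev : ∀ᶠ w in 𝓝[≠] (0 : ℂ), 0 ≤ ‖c‖ * ‖deriv f w‖ - ‖deriv (deriv f) w‖ := by
      filter_upwards [nhdsWithin_le_nhds (isOpen_ball.mem_nhds hz), self_mem_nhdsWithin]
        with w hw hw0
      exact sub_nonneg.2 (hpunctured w hw hw0)
    exact sub_nonneg.1 (ge_of_tendsto (hcont.tendsto.mono_left nhdsWithin_le_nhds) hev)
  · exact hpunctured z hz hz0

theorem norm_deriv_deriv_le_of_inConvexClass {D : ℝ} (hD : 0 ≤ D) {f : ℂ → ℂ}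
    (hf : InConvexClass (fun z => 1 + (D : ℂ) * z) f) :
    ∀ z ∈ unitDisk, ‖deriv (deriv f) z‖ ≤ D * ‖deriv f z‖ := by
  obtain ⟨⟨hfd, -, hf'₀⟩, ω, hωd, hω₀, hωm, hω⟩ := hf
  have hf' := (hfd.analyticOnNhd isOpen_ball).deriv
  have hode := (analyticOnNhd_id.mul hf'.deriv).eqOn_mul_of_div_eq hf'
    (analyticOnNhd_const.mul (hωd.analyticOnNhd isOpen_ball)) isOpen_ball
    (convex_ball 0 1).isPreconnected (mem_ball_self one_pos) (by simp [hf'₀])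
    fun z hz => add_left_cancel (hω z hz)
  intro z hz
  simpa [abs_of_nonneg hD] using
    norm_deriv_deriv_le_of_mul_eq hfd hωd hω₀ hωm (fun w hw => hode hw) z hz

theorem norm_deriv_smul_le_mul_exp {f : ℂ → ℂ} {D : ℝ} (hf : DifferentiableOn ℂ f (ball 0 1))
    (hbd : ∀ w ∈ ball (0 : ℂ) 1, ‖deriv (deriv f) w‖ ≤ D * ‖deriv f w‖)
    {z : ℂ} (hz : z ∈ ball 0 1) {t : ℝ} (ht : t ∈ Icc (0 : ℝ) 1) :
    ‖deriv f (t • z)‖ ≤ ‖deriv f z‖ * Real.exp (D * ‖z‖ * (1 - t)) := by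
  have hf' := (hf.analyticOnNhd isOpen_ball).deriv
  have hseg : ∀ s ∈ Icc (0 : ℝ) 1, (1 - s) • z ∈ ball (0 : ℂ) 1 := fun s hs =>
    (convex_ball 0 1).smul_mem_of_zero_mem (mem_ball_self one_pos) hz
      ⟨by linarith [hs.2], by linarith [hs.1]⟩
  have hderiv : ∀ s ∈ Icc (0 : ℝ) 1, HasDerivAt (fun s : ℝ => deriv f ((1 - s) • z))
      (-z * deriv (deriv f) ((1 - s) • z)) s := fun s hs => by
    have := ((hf' _ (hseg s hs)).differentiableAt.hasDerivAt).scomp s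
      (((hasDerivAt_id s).const_sub 1).smul_const z)
    exact this.congr_deriv (by simp)
  have hgron := norm_le_gronwallBound_of_norm_deriv_right_le (δ := ‖deriv f z‖) (K := D * ‖z‖)
    (ε := 0) (fun s hs => (hderiv s hs).continuousAt.continuousWithinAt)
    (fun s hs => (hderiv s (Ico_subset_Icc_self hs)).hasDerivWithinAt) (by simp) (fun s hs => by
      have := hbd _ (hseg s (Ico_subset_Icc_self hs))
      rw [norm_mul, norm_neg, add_zero]
      nlinarith [norm_nonneg z])
    (1 - t) ⟨by linarith [ht.2], by linarith [ht.1]⟩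
  simpa [gronwallBound_ε0] using hgron

theorem norm_le_norm_deriv_mul_exp {f : ℂ → ℂ} {D : ℝ} (hD : 0 < D)
    (hf : DifferentiableOn ℂ f (ball 0 1)) (hf₀ : f 0 = 0)
    (hbd : ∀ w ∈ ball (0 : ℂ) 1, ‖deriv (deriv f) w‖ ≤ D * ‖deriv f w‖)
    {z : ℂ} (hz : z ∈ ball 0 1) :
    ‖f z‖ ≤ ‖deriv f z‖ * (Real.exp (D * ‖z‖) - 1) / D := by
  have hseg : ∀ t ∈ Icc (0 : ℝ) 1, t • z ∈ ball (0 : ℂ) 1 := fun t ht =>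
    (convex_ball 0 1).smul_mem_of_zero_mem (mem_ball_self one_pos) hz ht
  have hderiv : ∀ t ∈ Icc (0 : ℝ) 1, HasDerivAt (fun t : ℝ => f (t • z))
      (z * deriv f (t • z)) t := fun t ht => by
    have := (hf.differentiableAt (isOpen_ball.mem_nhds (hseg t ht))).hasDerivAt.scomp t
      ((hasDerivAt_id t).smul_const z)
    exact this.congr_deriv (by simp)
  -- `B` is a primitive of the bound on `‖(d/dt) f (t • z)‖` from `norm_deriv_smul_le_mul_exp`.
  set B : ℝ → ℝ := fun t => ‖deriv f z‖ * (Real.exp (D * ‖z‖) - Real.exp (D * ‖z‖ * (1 - t))) / D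
  have hB : ∀ t, HasDerivAt B (‖deriv f z‖ * ‖z‖ * Real.exp (D * ‖z‖ * (1 - t))) t := fun t => by
    have := ((((hasDerivAt_id t).const_sub 1).const_mul (D * ‖z‖)).exp.const_sub
      (Real.exp (D * ‖z‖))).const_mul ‖deriv f z‖ |>.div_const D
    exact this.congr_deriv (by field_simp; simp)
  have := image_norm_le_of_norm_deriv_right_le_deriv_boundary
    (fun t ht => (hderiv t ht).continuousAt.continuousWithinAt)
    (fun t ht => (hderiv t (Ico_subset_Icc_self ht)).hasDerivWithinAt)
    (by simp [B, hf₀]) hB (fun t ht => by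
      have := norm_deriv_smul_le_mul_exp hf hbd hz (Ico_subset_Icc_self ht)
      rw [norm_mul]
      nlinarith [norm_nonneg z])
    (right_mem_Icc.2 zero_le_one)
  simpa [B] using this

theorem norm_deriv_le_of_majorizedBy {f g : ℂ → ℂ} (hf : DifferentiableOn ℂ f unitDisk)
    (hmaj : MajorizedBy g f) {z : ℂ} (hz : z ∈ unitDisk)
    (hfz : 2 * ‖f z‖ ≤ (1 - ‖z‖ ^ 2) * ‖deriv f z‖) :
    ‖deriv g z‖ ≤ ‖deriv f z‖ := by
  obtain ⟨Φ, hΦd, hΦb, hgΦ⟩ := hmaj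
  have hnhds : unitDisk ∈ 𝓝 z := isOpen_ball.mem_nhds hz
  have hderiv : deriv g z = deriv Φ z * f z + Φ z * deriv f z := by
    rw [EventuallyEq.deriv_eq (eventually_of_mem hnhds hgΦ)]
    exact deriv_mul (hΦd.differentiableAt hnhds) (hf.differentiableAt hnhds)
  have hpick := norm_deriv_mul_le_of_norm_le_one hΦd hΦb hz
  have ha := hΦb z hz
  -- `2 ‖Φ'‖ ‖f‖ ≤ ‖Φ'‖ (1 - ‖z‖²) ‖f'‖ ≤ (1 - ‖Φ‖²) ‖f'‖ ≤ 2 (1 - ‖Φ‖) ‖f'‖`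
  calc ‖deriv g z‖ ≤ ‖deriv Φ z‖ * ‖f z‖ + ‖Φ z‖ * ‖deriv f z‖ := by
        rw [hderiv, ← norm_mul, ← norm_mul]; exact norm_add_le _ _
    _ ≤ ‖deriv f z‖ := by
        nlinarith [mul_le_mul_of_nonneg_left hfz (norm_nonneg (deriv Φ z)),
          mul_le_mul_of_nonneg_right hpick (norm_nonneg (deriv f z)),
          mul_nonneg (sub_nonneg.2 ha) (mul_nonneg (sub_nonneg.2 ha) (norm_nonneg (deriv f z))),
          norm_nonneg (Φ z)]

theorem two_mul_exp_sub_one_eq_of_root {D r : ℝ} (hD : 0 < D) (hr : 0 < r)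
    (h : (1 - r ^ 2) * (D * r * Real.exp (-D * r) / (Real.exp (-D * r) - 1)) + 2 * r = 0) :
    2 * (Real.exp (D * r) - 1) = (1 - r ^ 2) * D := by
  set e := Real.exp (-D * r)
  set q := D * r * e / (e - 1)
  have he : e * Real.exp (D * r) = 1 := by rw [← Real.exp_add]; simp
  have hq : (e - 1) * q = D * r * e :=
    mul_div_cancel₀ _ (sub_ne_zero.2 (Real.exp_lt_one_iff.2 (by nlinarith)).ne)
  apply mul_left_cancel₀ hr.ne'
  linear_combination (Real.exp (D * r) - 1) * h + (1 - r ^ 2) * Real.exp (D * r) * hq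
    - (1 - r ^ 2) * (q - D * r) * he

theorem stmt_1_general (D : ℝ) (hD0 : 0 < D) (f g : ℂ → ℂ) (r₀ : ℝ)
    (hf : InConvexClass (fun z => 1 + (D : ℂ) * z) f)
    (hmaj : MajorizedBy g f)
    (hr₀pos : 0 < r₀)
    (hr₀root : (1 - r₀ ^ 2) *
      (D * r₀ * Real.exp (-D * r₀) / (Real.exp (-D * r₀) - 1)) + 2 * r₀ = 0) :
    ∀ z : ℂ, ‖z‖ ≤ r₀ →
      ‖deriv g z‖ ≤ ‖deriv f z‖ := by
  have hroot := two_mul_exp_sub_one_eq_of_root hD0 hr₀pos hr₀root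
  have hr₀1 : r₀ < 1 := by
    have := Real.one_lt_exp_iff.2 (mul_pos hD0 hr₀pos)
    have : 0 < 1 - r₀ ^ 2 := pos_of_mul_pos_left (by linarith) hD0.le
    nlinarith
  intro z hz
  have hzD : z ∈ unitDisk := mem_ball_zero_iff.2 (hz.trans_lt hr₀1)
  refine norm_deriv_le_of_majorizedBy hf.1.1 hmaj hzD ?_
  have hgrowth := norm_le_norm_deriv_mul_exp hD0 hf.1.1 hf.1.2.1
    (norm_deriv_deriv_le_of_inConvexClass hD0.le hf) hzD
  have hexp : 2 * (Real.exp (D * ‖z‖) - 1) ≤ (1 - ‖z‖ ^ 2) * D := by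
    have := Real.exp_le_exp.2 (mul_le_mul_of_nonneg_left hz hD0.le)
    nlinarith [mul_le_mul_of_nonneg_left (pow_le_pow_left₀ (norm_nonneg z) hz 2) hD0.le]
  rw [le_div_iff₀ hD0] at hgrowth
  nlinarith [norm_nonneg (deriv f z)]

theorem stmt_1 (D : ℝ) (hD0 : 0 < D) (hD1 : D ≤ 1) (f g : ℂ → ℂ) (r₀ : ℝ)
    (hf : InConvexClass (fun z => 1 + (D : ℂ) * z) f)
    (hg : InClassA g) (hmaj : MajorizedBy g f)
    (hr₀pos : 0 < r₀)
    (hr₀root : (1 - r₀ ^ 2) *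
      (D * r₀ * Real.exp (-D * r₀) / (Real.exp (-D * r₀) - 1)) + 2 * r₀ = 0)
    (hr₀least : ∀ r : ℝ, 0 < r →
      (1 - r ^ 2) * (D * r * Real.exp (-D * r) / (Real.exp (-D * r) - 1)) + 2 * r = 0 →
      r₀ ≤ r) :
    ∀ z : ℂ, ‖z‖ ≤ r₀ →
      ‖deriv g z‖ ≤ ‖deriv f z‖ :=
  stmt_1_general D hD0 f g r₀ hf hmaj hr₀pos hr₀root
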